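/- Let the replacement rule represent neutral drift and let the evolutionary Markov chain have mutation probability u = 0. Then for every state x ∈ {0,1}^G, the fixation probability of allele A from x equals the RV-weighted frequency: lim_{t→∞} P^{(t)}_{x→A} = x̂, where x̂ = (1/n) Σ_{g∈G} v_g x_g. In particular, lim_{t→∞} P^{(t)}_{1_{{g}}→A} = v_g/n for each g ∈ G, and the overall fixation probabilities satisfy ρ_A = ρ_a = b̂°/(n b°), where b° = Σ_{g,h} e°_{gh} and b̂° = Σ_{g,h} e°_{gh} v_h. -/

import Mathlib

/-!
Common formal scaffold for "A mathematical formalism for natural selection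
with arbitrary spatial and genetic structure" (Allen & McAvoy).

A population is a finite nonempty set `G` of genetic sites.  A state is a
subset of `G` (the set of sites occupied by allele `A`); `∅` is the
monoallelic state `a` and `Finset.univ` is the monoallelic state `A`.
A replacement event is a pair `(R, α)` with `R ⊆ G` and `α : R → G`.
-/

open Filter Topology Set

namespace NatSel

variable (G : Type) [Fintype G] [DecidableEq G]

/-- A state of the population: the set of sites holding allele `A`. -/
abbrev PopState := Finset G

/-- A replacement event `(R, α)`: the replaced set `R ⊆ G` together with the
parentage map `α : R → G`. -/
abbrev RepEvent := Σ R : Finset G, (↥R → G)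

variable {G}

/-- `x_g ∈ {0,1}` as a real number. -/
def xg (x : PopState G) (g : G) : ℝ := if g ∈ x then 1 else 0

/-- `α̃` : agrees with `α` on `R`, is the identity off `R`. -/
def tildeMap (e : RepEvent G) (g : G) : G :=
  if h : g ∈ e.1 then e.2 ⟨g, h⟩ else g

/-- `p` is a replacement rule: for each state it gives a probability
distribution over replacement events. -/
def IsRule (p : PopState G → RepEvent G → ℝ) : Prop :=
  (∀ x e, 0 ≤ p x e) ∧ ∀ x, ∑ e : RepEvent G, p x e = 1

/-- The Fixation Axiom. -/
def FixationAxiom (p : PopState G → RepEvent G → ℝ) : Prop :=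
  ∃ g : G, ∃ m : ℕ, 0 < m ∧ ∃ ev : Fin m → RepEvent G,
    (∀ k, ∀ x : PopState G, 0 < p x (ev k)) ∧
    (∃ k, g ∈ (ev k).1) ∧
    (∀ h : G, (List.ofFn fun k => tildeMap (ev k)).foldr (· ∘ ·) id h = g)

/-- `e_{gh}(x)`: marginal probability that the allele in site `h` is replaced
by a copy of the allele in site `g`, in state `x`. -/
def eMarg (p : PopState G → RepEvent G → ℝ) (g h : G) (x : PopState G) : ℝ :=
  ∑ e : RepEvent G, if hh : h ∈ e.1 then (if e.2 ⟨h, hh⟩ = g then p x e else 0) else 0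

/-- `b_g(x)`: expected offspring number (birth rate) of site `g` in state `x`. -/
def bRate (p : PopState G → RepEvent G → ℝ) (g : G) (x : PopState G) : ℝ :=
  ∑ h, eMarg p g h x

/-- `d_g(x)`: death probability of site `g` in state `x`. -/
def dProb (p : PopState G → RepEvent G → ℝ) (g : G) (x : PopState G) : ℝ :=
  ∑ h, eMarg p h g x

/-- `b(x)`: total expected offspring number in state `x`. -/
def bTot (p : PopState G → RepEvent G → ℝ) (x : PopState G) : ℝ :=
  ∑ g, bRate p g x

/-- Probability that a replaced site whose parent holds allele `parent`
(`true` = `A`) acquires allele `child`, with mutation probability `u` and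
mutational bias `ν`. -/
def siteProb (u ν : ℝ) (parent child : Bool) : ℝ :=
  (if child = parent then 1 - u else 0) + (if child = true then u * ν else u * (1 - ν))

/-- One-step transition probability `P_{x → y}` of the evolutionary Markov
chain with replacement rule `p`, mutation probability `u`, mutational bias `ν`. -/
def step (p : PopState G → RepEvent G → ℝ) (u ν : ℝ) (x y : PopState G) : ℝ :=
  ∑ e : RepEvent G, p x e *
    (if y \ e.1 = x \ e.1 then
       ∏ g ∈ e.1.attach, siteProb u ν (decide (e.2 g ∈ x)) (decide (g.1 ∈ y))
     else 0)

/-- `t`-step transition probabilities of a kernel `P`. -/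
def iterKer (P : PopState G → PopState G → ℝ) : ℕ → PopState G → PopState G → ℝ
  | 0, x, y => if x = y then 1 else 0
  | (t + 1), x, y => ∑ z : PopState G, iterKer P t x z * P z y

/-- The state obtained from `x` by the (mutation-free) replacement event `e`. -/
def applyEvent (e : RepEvent G) (x : PopState G) : PopState G :=
  Finset.univ.filter fun g => tildeMap e g ∈ x

/-- One-step transition probability of the mutation-free (`u = 0`) chain. -/
def step0 (p : PopState G → RepEvent G → ℝ) (x y : PopState G) : ℝ :=
  ∑ e : RepEvent G, if y = applyEvent e x then p x e else 0

/-- The mutant appearance distribution `μ_A`: probability `d_g(a)/b(a)` on the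
state `{g}`, for each `g ∈ G`. -/
noncomputable def muA (p : PopState G → RepEvent G → ℝ) (x : PopState G) : ℝ :=
  ∑ g : G, if x = {g} then dProb p g ∅ / bTot p ∅ else 0

/-- The mutant appearance distribution `μ_a`: probability `d_g(A)/b(A)` on the
state `G \ {g}`, for each `g ∈ G`. -/
noncomputable def mua (p : PopState G → RepEvent G → ℝ) (x : PopState G) : ℝ :=
  ∑ g : G, if x = Finset.univ \ {g} then dProb p g Finset.univ / bTot p Finset.univ else 0

/-- Fixation probability `ρ_A` (computed at `u = 0`). -/
noncomputable def rhoA (p : PopState G → RepEvent G → ℝ) (ν : ℝ) : ℝ :=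
  ∑ x : PopState G, muA p x *
    limUnder atTop (fun t => iterKer (step p 0 ν) t x Finset.univ)

/-- Fixation probability `ρ_a` (computed at `u = 0`). -/
noncomputable def rhoa (p : PopState G → RepEvent G → ℝ) (ν : ℝ) : ℝ :=
  ∑ x : PopState G, mua p x *
    limUnder atTop (fun t => iterKer (step p 0 ν) t x ∅)

/-- Frequency `x = (1/n) Σ_g x_g` of allele `A`. -/
noncomputable def freq (x : PopState G) : ℝ := (x.card : ℝ) / (Fintype.card G : ℝ)

/-- Expected change due to selection, `Δ_sel(x) = Σ_g x_g (b_g(x) − d_g(x))`. -/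
def deltaSel (p : PopState G → RepEvent G → ℝ) (x : PopState G) : ℝ :=
  ∑ g, xg x g * (bRate p g x - dProb p g x)

/-- The finset of states other than the monoallelic states `a = ∅`, `A = univ`. -/
def offStates (G : Type) [Fintype G] [DecidableEq G] : Finset (PopState G) :=
  Finset.univ.filter fun x : PopState G => x ≠ ∅ ∧ x ≠ Finset.univ

/-- Assumption 1: consistency of monoallelic states. -/
def ConsistentMono (p : PopState G → RepEvent G → ℝ) : Prop :=
  ∀ e : RepEvent G, p ∅ e = p Finset.univ e

/-- A replacement rule represents neutral drift: probabilities are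
state-independent. -/
def NeutralDrift (p : PopState G → RepEvent G → ℝ) : Prop :=
  ∀ x e, p x e = p ∅ e

/-- Reproductive values: `{v_g}` solves `d°_g v_g = Σ_h e°_{gh} v_h` (with the
monoallelic-state quantities) together with `Σ_g v_g = n`. -/
def IsRepVal (p : PopState G → RepEvent G → ℝ) (v : G → ℝ) : Prop :=
  (∀ g, dProb p g ∅ * v g = ∑ h, eMarg p g h ∅ * v h) ∧
    ∑ g, v g = (Fintype.card G : ℝ)

/-- RV-weighted birth rate `b̂_g(x) = Σ_h e_{gh}(x) v_h`. -/
def bHat (p : PopState G → RepEvent G → ℝ) (v : G → ℝ) (g : G) (x : PopState G) : ℝ :=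
  ∑ h, eMarg p g h x * v h

/-- RV-weighted death rate `d̂_g(x) = v_g d_g(x)`. -/
def dHat (p : PopState G → RepEvent G → ℝ) (v : G → ℝ) (g : G) (x : PopState G) : ℝ :=
  v g * dProb p g x

/-- Total RV-weighted birth rate `b̂(x)`. -/
def bHatTot (p : PopState G → RepEvent G → ℝ) (v : G → ℝ) (x : PopState G) : ℝ :=
  ∑ g, bHat p v g x

/-- RV-weighted change due to selection `Δ̂_sel(x) = Σ_g x_g (b̂_g(x) − d̂_g(x))`. -/
def deltaHatSel (p : PopState G → RepEvent G → ℝ) (v : G → ℝ) (x : PopState G) : ℝ :=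
  ∑ g, xg x g * (bHat p v g x - dHat p v g x)

/-- Fitness `w_g(x) = v_g − d̂_g(x) + b̂_g(x)`. -/
def fitness (p : PopState G → RepEvent G → ℝ) (v : G → ℝ) (g : G) (x : PopState G) : ℝ :=
  v g - dHat p v g x + bHat p v g x

/-- RV-weighted frequency `x̂ = (1/n) Σ_g v_g x_g`. -/
noncomputable def freqHat (v : G → ℝ) (x : PopState G) : ℝ :=
  (∑ g, v g * xg x g) / (Fintype.card G : ℝ)

/-- `{π u}_{0<u≤1}` is, for each mutation probability `0 < u ≤ 1`, a stationary
distribution of the evolutionary Markov chain (i.e. the mutation-selection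
stationary distribution, which is unique by ergodicity). -/
def IsMSSFamily (p : PopState G → RepEvent G → ℝ) (ν : ℝ)
    (π : ℝ → PopState G → ℝ) : Prop :=
  ∀ u, u ∈ Set.Ioc (0 : ℝ) 1 →
    (∀ x, 0 ≤ π u x) ∧ (∑ x : PopState G, π u x = 1) ∧
      ∀ y, π u y = ∑ x : PopState G, π u x * step p u ν x y

/-- `πR` is the rare-mutation conditional (RMC) distribution associated with
the MSS family `π`: for each non-monoallelic state `x`,
`πR x = lim_{u→0} π_MSS(x)/(1 − π_MSS(A) − π_MSS(a))`. -/
def IsRMC (π : ℝ → PopState G → ℝ) (πR : PopState G → ℝ) : Prop :=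
  ∀ x ∈ offStates G,
    Tendsto (fun u => π u x / (1 - π u Finset.univ - π u ∅))
      (nhdsWithin 0 (Set.Ioi 0)) (nhds (πR x))

end NatSel

open NatSel Filter Topology

/-!
Under neutral drift the RV-weighted frequency `x̂` is harmonic for the mutation-free chain: the
expected value of `x̂` after one replacement event is its current value, and this is exactly the
defining equation `d°_g v_g = Σ_h e°_{gh} v_h`. The monoallelic states are absorbing, and the events
of the Fixation Axiom, applied in turn, carry every state to a monoallelic one; so within a fixed
number of steps absorption has probability bounded below, and the mass on the other states decays
geometrically. Hence `x̂(x) = 𝔼ₓ x̂(X_t) → P(fixation of A)`. Averaging over the mutant appearance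
distributions gives `ρ_A` and `ρ_a`.
-/

theorem tendsto_zero_of_antitone_of_le_mul {a : ℕ → ℝ} (ha : ∀ t, 0 ≤ a t) (hanti : Antitone a)
    {m : ℕ} (hm : 0 < m) {r : ℝ} (hr₀ : 0 ≤ r) (hr₁ : r < 1) (hdecay : ∀ t, a (t + m) ≤ r * a t) :
    Tendsto a atTop (𝓝 0) := by
  have hgeom : ∀ k, a (k * m) ≤ r ^ k * a 0 := by
    intro k
    induction k with
    | zero => simp
    | succ k ih =>
      calc a ((k + 1) * m) = a (k * m + m) := by rw [add_one_mul]
        _ ≤ r * a (k * m) := hdecay _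
        _ ≤ r * (r ^ k * a 0) := mul_le_mul_of_nonneg_left ih hr₀
        _ = r ^ (k + 1) * a 0 := by ring
  have hbound : ∀ t, a t ≤ r ^ (t / m) * a 0 := fun t =>
    (hanti (Nat.div_mul_le_self t m)).trans (hgeom _)
  refine squeeze_zero ha hbound ?_
  simpa using ((tendsto_pow_atTop_nhds_zero_of_lt_one hr₀ hr₁).comp
    (Nat.tendsto_div_const_atTop hm.ne')).mul_const (a 0)

theorem sum_sum_ite_eq_mul {κ ι : Type*} [Fintype κ] [Fintype ι] [DecidableEq ι] (s : κ → ι)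
    (w : κ → ℝ) (F : ι → ℝ) :
    ∑ i, (∑ k, if i = s k then w k else 0) * F i = ∑ k, w k * F (s k) := by
  simp only [Finset.sum_mul, ite_mul, zero_mul]
  rw [Finset.sum_comm]
  simp

namespace Matrix

variable {ι : Type*} [Fintype ι] [DecidableEq ι] {M : Matrix ι ι ℝ}

theorem pow_row_of_row_eq_single {a : ι} (ha : M a = Pi.single a 1) (t : ℕ) :
    (M ^ t) a = Pi.single a 1 := by
  induction t with
  | zero => ext y; simp [one_apply, Pi.single_apply, eq_comm]
  | succ t ih => ext y; simp [pow_succ', mul_apply, ha, ih, Pi.single_apply]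

variable {A : Finset ι}

theorem sum_compl_pow_add_le (hM : M ∈ rowStochastic ℝ ι) (hA : ∀ a ∈ A, M a = Pi.single a 1)
    {s : ℕ} {c : ℝ} (hc : ∀ z, ∑ y ∈ Aᶜ, (M ^ s) z y ≤ c) (t : ℕ) (x : ι) :
    ∑ y ∈ Aᶜ, (M ^ (t + s)) x y ≤ c * ∑ y ∈ Aᶜ, (M ^ t) x y := by
  have hAs : ∀ z ∈ A, ∑ y ∈ Aᶜ, (M ^ s) z y = 0 := fun z hz =>
    Finset.sum_eq_zero fun y hy => by
      rw [pow_row_of_row_eq_single (hA z hz), Pi.single_apply,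
        if_neg (by rintro rfl; exact Finset.mem_compl.1 hy hz)]
  calc ∑ y ∈ Aᶜ, (M ^ (t + s)) x y
      = ∑ z, (M ^ t) x z * ∑ y ∈ Aᶜ, (M ^ s) z y := by
        simp only [pow_add, mul_apply, Finset.mul_sum]
        exact Finset.sum_comm
    _ = ∑ z ∈ Aᶜ, (M ^ t) x z * ∑ y ∈ Aᶜ, (M ^ s) z y := by
        rw [← Finset.sum_compl_add_sum A, Finset.sum_eq_zero (s := A) fun z hz => by
          rw [hAs z hz, mul_zero], add_zero]
    _ ≤ ∑ z ∈ Aᶜ, (M ^ t) x z * c := Finset.sum_le_sum fun z _ =>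
        mul_le_mul_of_nonneg_left (hc z) (nonneg_of_mem_rowStochastic (pow_mem hM t))
    _ = c * ∑ y ∈ Aᶜ, (M ^ t) x y := by rw [← Finset.sum_mul, mul_comm]

theorem tendsto_sum_compl_pow_zero (hM : M ∈ rowStochastic ℝ ι)
    (hA : ∀ a ∈ A, M a = Pi.single a 1) {m : ℕ} (hm : 0 < m) {δ : ℝ} (hδ : 0 < δ)
    (hreach : ∀ x, δ ≤ ∑ y ∈ A, (M ^ m) x y) (x : ι) :
    Tendsto (fun t => ∑ y ∈ Aᶜ, (M ^ t) x y) atTop (𝓝 0) := by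
  have hsplit : ∀ t z, ∑ y ∈ Aᶜ, (M ^ t) z y = 1 - ∑ y ∈ A, (M ^ t) z y := fun t z => by
    rw [eq_sub_iff_add_eq, Finset.sum_compl_add_sum, sum_row_of_mem_rowStochastic (pow_mem hM t)]
  have hnonneg : ∀ (B : Finset ι) t z, 0 ≤ ∑ y ∈ B, (M ^ t) z y := fun B t z =>
    Finset.sum_nonneg fun y _ => nonneg_of_mem_rowStochastic (pow_mem hM t)
  have hstep : ∀ t, ∑ y ∈ Aᶜ, (M ^ (t + 1)) x y ≤ ∑ y ∈ Aᶜ, (M ^ t) x y := fun t => by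
    simpa using sum_compl_pow_add_le hM hA (s := 1) (c := 1)
      (fun z => by linarith [hsplit 1 z, hnonneg A 1 z]) t x
  exact tendsto_zero_of_antitone_of_le_mul (hnonneg Aᶜ · x) (antitone_nat_of_succ_le hstep) hm
    (r := 1 - δ) (by linarith [hsplit m x, hreach x, hnonneg Aᶜ m x]) (by linarith)
    (sum_compl_pow_add_le hM hA (c := 1 - δ) (fun z => by linarith [hsplit m z, hreach z]) · x)

theorem pow_mulVec_of_mulVec_eq {f : ι → ℝ} (hf : M *ᵥ f = f) (t : ℕ) : M ^ t *ᵥ f = f := by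
  induction t with
  | zero => simp
  | succ t ih => rw [pow_succ, ← mulVec_mulVec, hf, ih]

theorem tendsto_sum_pow_mul_of_mulVec_eq (hM : M ∈ rowStochastic ℝ ι) {x : ι}
    (htrans : Tendsto (fun t => ∑ y ∈ Aᶜ, (M ^ t) x y) atTop (𝓝 0)) {f : ι → ℝ}
    (hf : M *ᵥ f = f) : Tendsto (fun t => ∑ y ∈ A, (M ^ t) x y * f y) atTop (𝓝 (f x)) := by
  set C := ∑ y, |f y|
  have hrest : Tendsto (fun t => ∑ y ∈ Aᶜ, (M ^ t) x y * f y) atTop (𝓝 0) := by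
    refine squeeze_zero_norm (fun t => ?_) (by simpa using htrans.mul_const C)
    calc ‖∑ y ∈ Aᶜ, (M ^ t) x y * f y‖ ≤ ∑ y ∈ Aᶜ, (M ^ t) x y * C := by
          refine (norm_sum_le _ _).trans (Finset.sum_le_sum fun y _ => ?_)
          rw [norm_mul, Real.norm_of_nonneg (nonneg_of_mem_rowStochastic (pow_mem hM t))]
          exact mul_le_mul_of_nonneg_left
            (Finset.single_le_sum (f := fun y => |f y|) (fun _ _ => abs_nonneg _)
              (Finset.mem_univ y)) (nonneg_of_mem_rowStochastic (pow_mem hM t))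
      _ = (∑ y ∈ Aᶜ, (M ^ t) x y) * C := (Finset.sum_mul ..).symm
  have hsplit : ∀ t, ∑ y ∈ A, (M ^ t) x y * f y = f x - ∑ y ∈ Aᶜ, (M ^ t) x y * f y := fun t => by
    rw [eq_sub_iff_add_eq', Finset.sum_compl_add_sum]
    exact congrFun (pow_mulVec_of_mulVec_eq hf t) x
  simpa [hsplit] using tendsto_const_nhds.sub hrest

end Matrix

namespace NatSel

open Matrix

variable {G : Type} [Fintype G] [DecidableEq G] {p : PopState G → RepEvent G → ℝ}

theorem iterKer_eq_pow (P : PopState G → PopState G → ℝ) (t : ℕ) (x y : PopState G) :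
    iterKer P t x y = (Matrix.of P ^ t) x y := by
  induction t generalizing y with
  | zero => simp [iterKer, Matrix.one_apply]
  | succ t ih => simp [iterKer, pow_succ, Matrix.mul_apply, ih]

theorem mem_applyEvent {e : RepEvent G} {x : PopState G} {g : G} :
    g ∈ applyEvent e x ↔ tildeMap e g ∈ x := by
  simp [applyEvent]

theorem applyEvent_empty (e : RepEvent G) : applyEvent e (∅ : PopState G) = ∅ := by
  ext g; simp [mem_applyEvent]

theorem applyEvent_univ (e : RepEvent G) : applyEvent e (Finset.univ : PopState G) = .univ := by
  ext g; simp [mem_applyEvent]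

theorem xg_applyEvent (e : RepEvent G) (x : PopState G) (g : G) :
    xg (applyEvent e x) g = xg x (tildeMap e g) := by
  simp [xg, mem_applyEvent]

theorem mulVec_step0 (f : PopState G → ℝ) (x : PopState G) :
    (Matrix.of (step0 p) *ᵥ f) x = ∑ e, p x e * f (applyEvent e x) := by
  simp only [Matrix.mulVec, dotProduct, Matrix.of_apply, step0, Finset.sum_mul, ite_mul, zero_mul]
  rw [Finset.sum_comm]
  simp

theorem step0_mem_rowStochastic (hrule : IsRule p) :
    Matrix.of (step0 p) ∈ Matrix.rowStochastic ℝ (PopState G) := by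
  refine Matrix.mem_rowStochastic.2 ⟨fun x y => Finset.sum_nonneg fun e _ => ?_, funext fun x => ?_⟩
  · split_ifs
    exacts [hrule.1 x e, le_rfl]
  · rw [mulVec_step0]
    simpa using hrule.2 x

theorem step0_row_of_applyEvent_eq (hrule : IsRule p) {x : PopState G}
    (hx : ∀ e, applyEvent e x = x) : Matrix.of (step0 p) x = Pi.single x 1 := by
  ext y
  by_cases hy : y = x <;> simp [step0, hx, hy, hrule.2 x]

theorem le_step0_applyEvent (hrule : IsRule p) (x : PopState G) (e : RepEvent G) :
    p x e ≤ step0 p x (applyEvent e x) := by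
  simpa [step0] using
    Finset.single_le_sum (f := fun e' => if applyEvent e x = applyEvent e' x then p x e' else 0)
      (fun e' _ => by split_ifs; exacts [hrule.1 x e', le_rfl]) (Finset.mem_univ e)

def applyList (L : List (RepEvent G)) (x : PopState G) : PopState G :=
  L.foldl (fun y e => applyEvent e y) x

theorem mem_applyList (L : List (RepEvent G)) (x : PopState G) (g : G) :
    g ∈ applyList L x ↔ (L.map tildeMap).foldr (· ∘ ·) id g ∈ x := by
  induction L generalizing x with
  | nil => simp [applyList]
  | cons e L ih =>
    simp only [applyList, List.foldl_cons] at ih ⊢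
    rw [ih, mem_applyEvent]
    simp

theorem prod_le_pow_applyList (hrule : IsRule p) {c : RepEvent G → ℝ} (hc₀ : ∀ e, 0 ≤ c e)
    (hc : ∀ x e, c e ≤ p x e) (L : List (RepEvent G)) (x : PopState G) :
    (L.map c).prod ≤ (Matrix.of (step0 p) ^ L.length) x (applyList L x) := by
  induction L generalizing x with
  | nil => simp [applyList]
  | cons e L ih =>
    set P := Matrix.of (step0 p)
    set y := applyList L (applyEvent e x)
    have hP := step0_mem_rowStochastic hrule
    calc ((e :: L).map c).prod = c e * (L.map c).prod := List.prod_cons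
      _ ≤ P x (applyEvent e x) * (P ^ L.length) (applyEvent e x) y :=
          mul_le_mul ((hc x e).trans (le_step0_applyEvent hrule x e)) (ih _)
            (List.prod_nonneg fun a ha => by
              obtain ⟨e', -, rfl⟩ := List.mem_map.1 ha
              exact hc₀ e')
            (nonneg_of_mem_rowStochastic hP)
      _ ≤ ∑ z, P x z * (P ^ L.length) z y :=
          Finset.single_le_sum (f := fun z => P x z * (P ^ L.length) z y)
            (fun z _ => mul_nonneg (nonneg_of_mem_rowStochastic hP)
              (nonneg_of_mem_rowStochastic (pow_mem hP _))) (Finset.mem_univ _)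
      _ = (P ^ (e :: L).length) x (applyList (e :: L) x) := by
          rw [List.length_cons, pow_succ', mul_apply]
          rfl

theorem exists_absorption_bound (hrule : IsRule p) (hfix : FixationAxiom p) :
    ∃ m, 0 < m ∧ ∃ δ : ℝ, 0 < δ ∧
      ∀ x, δ ≤ ∑ y ∈ {∅, Finset.univ}, (Matrix.of (step0 p) ^ m) x y := by
  obtain ⟨g, m, hm, ev, hpos, -, hcomp⟩ := hfix
  set c : RepEvent G → ℝ := fun e => Finset.univ.inf' Finset.univ_nonempty (p · e)
  have hc : ∀ x e, c e ≤ p x e := fun x e => Finset.inf'_le _ (Finset.mem_univ x)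
  have hcpos : ∀ k, 0 < c (ev k) := fun k =>
    (Finset.lt_inf'_iff _).2 fun x _ => hpos k x
  refine ⟨m, hm, ((List.ofFn ev).map c).prod, List.prod_pos ?_, fun x => ?_⟩
  · simpa [List.mem_ofFn] using hcpos
  have hfixed : applyList (List.ofFn ev) x = if g ∈ x then .univ else ∅ := by
    ext h
    rw [mem_applyList, List.map_ofFn, Function.comp_def, hcomp h]
    split_ifs <;> simp_all
  have hmem : applyList (List.ofFn ev) x ∈ ({∅, Finset.univ} : Finset (PopState G)) := by
    rw [hfixed]; split_ifs <;> simp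
  have hM := step0_mem_rowStochastic hrule
  calc ((List.ofFn ev).map c).prod
      ≤ (Matrix.of (step0 p) ^ m) x (applyList (List.ofFn ev) x) := by
        simpa using prod_le_pow_applyList hrule
          (fun e => Finset.le_inf' _ _ fun y _ => hrule.1 y e) hc (List.ofFn ev) x
    _ ≤ ∑ y ∈ {∅, Finset.univ}, (Matrix.of (step0 p) ^ m) x y :=
        Finset.single_le_sum (f := fun y => (Matrix.of (step0 p) ^ m) x y)
          (fun y _ => nonneg_of_mem_rowStochastic (pow_mem hM m)) hmem

theorem sum_eMarg_mul (g : G) (x : PopState G) (φ : G → ℝ) :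
    ∑ h, eMarg p h g x * φ h = ∑ e, if hg : g ∈ e.1 then p x e * φ (e.2 ⟨g, hg⟩) else 0 := by
  simp only [eMarg, Finset.sum_mul]
  rw [Finset.sum_comm]
  refine Finset.sum_congr rfl fun e _ => ?_
  by_cases hg : g ∈ e.1 <;> simp [hg, ite_mul]

theorem dProb_eq_sum (g : G) (x : PopState G) :
    dProb p g x = ∑ e, if g ∈ e.1 then p x e else 0 := by
  simpa [dProb] using sum_eMarg_mul (p := p) g x 1

theorem sum_mul_tildeMap {x : PopState G} (hx : ∑ e, p x e = 1) (φ : G → ℝ) (g : G) :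
    ∑ e, p x e * φ (tildeMap e g) = ∑ h, eMarg p h g x * φ h + (1 - dProb p g x) * φ g := by
  have hsplit : ∀ e, p x e * φ (tildeMap e g) =
      (if hg : g ∈ e.1 then p x e * φ (e.2 ⟨g, hg⟩) else 0) +
        (p x e * φ g - (if g ∈ e.1 then p x e else 0) * φ g) := fun e => by
    by_cases hg : g ∈ e.1 <;> simp [tildeMap, hg]
  rw [Finset.sum_congr rfl fun e _ => hsplit e, Finset.sum_add_distrib, Finset.sum_sub_distrib,
    ← Finset.sum_mul, ← Finset.sum_mul, hx, sum_eMarg_mul, dProb_eq_sum]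
  ring

theorem sum_mul_sum_mul_tildeMap {x : PopState G} (hx : ∑ e, p x e = 1) {v : G → ℝ}
    (hv : ∀ g, dProb p g x * v g = ∑ h, eMarg p g h x * v h) (φ : G → ℝ) :
    ∑ e, p x e * ∑ g, v g * φ (tildeMap e g) = ∑ g, v g * φ g := by
  have hbirths : ∑ g, v g * ∑ h, eMarg p h g x * φ h = ∑ h, dProb p h x * v h * φ h := by
    simp only [Finset.mul_sum, hv, Finset.sum_mul]
    rw [Finset.sum_comm]
    exact Finset.sum_congr rfl fun h _ => Finset.sum_congr rfl fun g _ => by ring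
  calc ∑ e, p x e * ∑ g, v g * φ (tildeMap e g)
      = ∑ g, v g * ∑ e, p x e * φ (tildeMap e g) := by
        simp only [Finset.mul_sum]
        rw [Finset.sum_comm]
        exact Finset.sum_congr rfl fun g _ => Finset.sum_congr rfl fun e _ => by ring
    _ = ∑ g, v g * φ g + (∑ g, v g * ∑ h, eMarg p h g x * φ h - ∑ g, dProb p g x * v g * φ g) := by
        rw [← Finset.sum_sub_distrib, ← Finset.sum_add_distrib]
        exact Finset.sum_congr rfl fun g _ => by rw [sum_mul_tildeMap hx]; ring
    _ = ∑ g, v g * φ g := by rw [hbirths, sub_self, add_zero]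

theorem eMarg_of_neutralDrift (hneut : NeutralDrift p) (g h : G) (x : PopState G) :
    eMarg p g h x = eMarg p g h ∅ := by
  simp only [eMarg, hneut x]

theorem dProb_of_neutralDrift (hneut : NeutralDrift p) (g : G) (x : PopState G) :
    dProb p g x = dProb p g ∅ := by
  simp only [dProb, eMarg_of_neutralDrift hneut _ g x]

theorem bTot_of_neutralDrift (hneut : NeutralDrift p) (x : PopState G) :
    bTot p x = bTot p ∅ := by
  simp only [bTot, bRate, eMarg_of_neutralDrift hneut _ _ x]

theorem bHatTot_eq_sum_dProb_mul {v : G → ℝ} (hv : IsRepVal p v) :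
    bHatTot p v ∅ = ∑ g, dProb p g ∅ * v g :=
  Finset.sum_congr rfl fun g _ => (hv.1 g).symm

theorem freqHat_empty (v : G → ℝ) : freqHat v ∅ = 0 := by
  simp [freqHat, xg]

theorem freqHat_singleton (v : G → ℝ) (g : G) :
    freqHat v {g} = v g / Fintype.card G := by
  simp [freqHat, xg]

theorem freqHat_univ_sdiff [Nonempty G] {v : G → ℝ} (hv : ∑ g, v g = Fintype.card G)
    (x : PopState G) : freqHat v (Finset.univ \ x) = 1 - freqHat v x := by
  have hn : (Fintype.card G : ℝ) ≠ 0 := Nat.cast_ne_zero.2 Fintype.card_ne_zero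
  have hxg : ∀ g, xg (Finset.univ \ x) g = 1 - xg x g := fun g => by
    by_cases hg : g ∈ x <;> simp [xg, hg]
  simp only [freqHat, hxg, mul_sub, mul_one, Finset.sum_sub_distrib, hv, sub_div, div_self hn]

theorem freqHat_univ [Nonempty G] {v : G → ℝ} (hv : ∑ g, v g = Fintype.card G) :
    freqHat v Finset.univ = 1 := by
  simpa [freqHat_empty] using freqHat_univ_sdiff hv ∅

theorem step0_mulVec_freqHat (hrule : IsRule p) (hneut : NeutralDrift p) {v : G → ℝ}
    (hv : IsRepVal p v) : Matrix.of (step0 p) *ᵥ freqHat v = freqHat v := by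
  funext x
  simp only [mulVec_step0, hneut x, freqHat, xg_applyEvent, mul_div_assoc', ← Finset.sum_div]
  rw [sum_mul_sum_mul_tildeMap (hrule.2 ∅) hv.1]

theorem tendsto_iterKer_step0 [Nonempty G] (hrule : IsRule p) (hfix : FixationAxiom p)
    {f : PopState G → ℝ} (hf : Matrix.of (step0 p) *ᵥ f = f) (x : PopState G) :
    Tendsto (fun t => iterKer (step0 p) t x ∅ * f ∅ + iterKer (step0 p) t x .univ * f .univ)
      atTop (𝓝 (f x)) := by
  obtain ⟨m, hm, δ, hδ, hreach⟩ := exists_absorption_bound hrule hfix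
  have hM := step0_mem_rowStochastic hrule
  have hA : ∀ a ∈ ({∅, .univ} : Finset (PopState G)), Matrix.of (step0 p) a = Pi.single a 1 := by
    simp [step0_row_of_applyEvent_eq hrule, applyEvent_empty, applyEvent_univ]
  simpa [iterKer_eq_pow, Finset.sum_pair Finset.univ_nonempty.ne_empty.symm] using
    tendsto_sum_pow_mul_of_mulVec_eq hM (tendsto_sum_compl_pow_zero hM hA hm hδ hreach x) hf

theorem tendsto_iterKer_step0_univ [Nonempty G] (hrule : IsRule p) (hfix : FixationAxiom p)
    (hneut : NeutralDrift p) {v : G → ℝ} (hv : IsRepVal p v) (x : PopState G) :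
    Tendsto (fun t => iterKer (step0 p) t x .univ) atTop (𝓝 (freqHat v x)) := by
  simpa [freqHat_empty, freqHat_univ hv.2] using
    tendsto_iterKer_step0 hrule hfix (step0_mulVec_freqHat hrule hneut hv) x

theorem tendsto_iterKer_step0_empty [Nonempty G] (hrule : IsRule p) (hfix : FixationAxiom p)
    (hneut : NeutralDrift p) {v : G → ℝ} (hv : IsRepVal p v) (x : PopState G) :
    Tendsto (fun t => iterKer (step0 p) t x ∅) atTop (𝓝 (1 - freqHat v x)) := by
  have hf : Matrix.of (step0 p) *ᵥ (1 - freqHat v) = 1 - freqHat v := by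
    rw [mulVec_sub, one_vecMul_of_mem_rowStochastic (step0_mem_rowStochastic hrule),
      step0_mulVec_freqHat hrule hneut hv]
  simpa [freqHat_empty, freqHat_univ hv.2] using tendsto_iterKer_step0 hrule hfix hf x

theorem sum_muA_mul (F : PopState G → ℝ) :
    ∑ x, muA p x * F x = ∑ g, dProb p g ∅ / bTot p ∅ * F {g} := by
  unfold muA
  exact sum_sum_ite_eq_mul (fun g => {g}) (fun g => dProb p g ∅ / bTot p ∅) F

theorem sum_mua_mul (F : PopState G → ℝ) :
    ∑ x, mua p x * F x = ∑ g, dProb p g .univ / bTot p .univ * F (.univ \ {g}) := by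
  unfold mua
  exact sum_sum_ite_eq_mul (fun g => (Finset.univ \ {g} : PopState G))
    (fun g => dProb p g .univ / bTot p .univ) F

end NatSel

/-- Theorem 8 of Allen & McAvoy: under neutral drift with
`u = 0`, the fixation probability of allele `A` from any state `x` equals the
RV-weighted frequency `x̂`; in particular the fixation probability from the
single-mutant state `1_{{g}}` is `v_g / n`, and the overall fixation
probabilities satisfy `ρ_A = ρ_a = b̂°/(n b°)`. -/
theorem statement8
    {G : Type} [Fintype G] [DecidableEq G] [Nonempty G]
    (p : PopState G → RepEvent G → ℝ) (hrule : IsRule p) (hfix : FixationAxiom p)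
    (hneut : NeutralDrift p)
    (v : G → ℝ) (hv : IsRepVal p v) :
    (∀ x : PopState G,
      Tendsto (fun t => iterKer (step0 p) t x Finset.univ) atTop
        (nhds (freqHat v x))) ∧
    (∀ g : G,
      Tendsto (fun t => iterKer (step0 p) t {g} Finset.univ) atTop
        (nhds (v g / (Fintype.card G : ℝ)))) ∧
    ((∑ x : PopState G, muA p x *
        limUnder atTop fun t => iterKer (step0 p) t x Finset.univ) =
      bHatTot p v ∅ / ((Fintype.card G : ℝ) * bTot p ∅)) ∧
    ((∑ x : PopState G, mua p x *
        limUnder atTop fun t => iterKer (step0 p) t x ∅) =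
      bHatTot p v ∅ / ((Fintype.card G : ℝ) * bTot p ∅)) := by
  have hA := tendsto_iterKer_step0_univ hrule hfix hneut hv
  have ha := tendsto_iterKer_step0_empty hrule hfix hneut hv
  have hρ : ∑ g, dProb p g ∅ / bTot p ∅ * freqHat v {g} =
      bHatTot p v ∅ / ((Fintype.card G : ℝ) * bTot p ∅) := by
    rw [bHatTot_eq_sum_dProb_mul hv, Finset.sum_div]
    exact Finset.sum_congr rfl fun g _ => by rw [freqHat_singleton]; ring
  refine ⟨hA, fun g => freqHat_singleton v g ▸ hA {g}, ?_, ?_⟩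
  · simp only [(hA _).limUnder_eq]
    exact (sum_muA_mul _).trans hρ
  · simp only [(ha _).limUnder_eq]
    refine (sum_mua_mul _).trans (Eq.trans ?_ hρ)
    simp only [freqHat_univ_sdiff hv.2, sub_sub_cancel, dProb_of_neutralDrift hneut _ .univ,
      bTot_of_neutralDrift hneut .univ]
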